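/- Let μ : ℝ^d → ℝ^D and σ : ℝ^d → ℝ^D be continuously differentiable, let ε be a random vector in ℝ^D with mean zero, identity covariance, and independent coordinates, and define the random map g_ε(z) = μ(z) + diag(ε)·σ(z). Then the expectation over ε of the random pull-back metric J_{g_ε}(z)ᵀ J_{g_ε}(z) equals J_μ(z)ᵀ J_μ(z) + J_σ(z)ᵀ J_σ(z). -/

import Mathlib

open Matrix Real MeasureTheory ProbabilityTheory

lemma aux_int {Ω : Type*} [MeasurableSpace Ω] (P : Measure Ω) [IsProbabilityMeasure P]
    (e : Ω → ℝ) (h1 : Integrable e P) (h2 : Integrable (fun ω => e ω * e ω) P)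
    (hm : ∫ ω, e ω ∂P = 0) (hc : ∫ ω, e ω * e ω ∂P = 1)
    (a b c f : ℝ) :
    ∫ ω, (a + e ω * b) * (c + e ω * f) ∂P = a * c + b * f := by
  have heq : (fun ω => (a + e ω * b) * (c + e ω * f))
      = fun ω => a * c + ((a * f + c * b) * e ω + (b * f) * (e ω * e ω)) := by
    funext ω; ring
  rw [heq]
  have e1 : ∫ ω, a * c + ((a * f + c * b) * e ω + b * f * (e ω * e ω)) ∂P
      = (∫ _ω, a * c ∂P) + ∫ ω, (a * f + c * b) * e ω + b * f * (e ω * e ω) ∂P :=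
    integral_add (integrable_const _) ((h1.const_mul _).add (h2.const_mul _))
  have e2 : ∫ ω, (a * f + c * b) * e ω + b * f * (e ω * e ω) ∂P
      = (∫ ω, (a * f + c * b) * e ω ∂P) + ∫ ω, b * f * (e ω * e ω) ∂P :=
    integral_add (h1.const_mul _) (h2.const_mul _)
  rw [e1, e2]
  simp [integral_const_mul, hm, hc]

/-- For the stochastic generator `g_ε(z) = μ(z) + diag(ε)·σ(z)` with `ε` having
mean zero, identity covariance and independent coordinates, the expected
(entrywise) pull-back metric equals `J_μᵀJ_μ + J_σᵀJ_σ`. -/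
theorem stmt_3 {d D : ℕ} (μ σ : (Fin d → ℝ) → Fin D → ℝ)
    (hμ : ContDiff ℝ 1 μ) (hσ : ContDiff ℝ 1 σ)
    (Jμ Jσ : (Fin d → ℝ) → Matrix (Fin D) (Fin d) ℝ)
    (hJμ : ∀ z i j, Jμ z i j = fderiv ℝ (fun w => μ w i) z (Pi.single j 1))
    (hJσ : ∀ z i j, Jσ z i j = fderiv ℝ (fun w => σ w i) z (Pi.single j 1))
    {Ω : Type*} [MeasurableSpace Ω] (P : Measure Ω) [IsProbabilityMeasure P]
    (ε : Ω → Fin D → ℝ)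
    (hmeas : ∀ i, Measurable fun ω => ε ω i)
    (hindep : iIndepFun (fun i ω => ε ω i) P)
    (hint1 : ∀ i, Integrable (fun ω => ε ω i) P)
    (hint2 : ∀ i j, Integrable (fun ω => ε ω i * ε ω j) P)
    (hmean : ∀ i, ∫ ω, ε ω i ∂P = 0)
    (hcov : ∀ i j, ∫ ω, ε ω i * ε ω j ∂P = if i = j then 1 else 0) :
    ∀ (z : Fin d → ℝ) (i j : Fin d),
      (∫ ω, ((Jμ z + Matrix.diagonal (ε ω) * Jσ z)ᵀ *
              (Jμ z + Matrix.diagonal (ε ω) * Jσ z)) i j ∂P)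
        = ((Jμ z)ᵀ * Jμ z + (Jσ z)ᵀ * Jσ z) i j := by
  intro z i j
  have entry : ∀ ω, ((Jμ z + Matrix.diagonal (ε ω) * Jσ z)ᵀ *
      (Jμ z + Matrix.diagonal (ε ω) * Jσ z)) i j
      = ∑ k, (Jμ z k i + ε ω k * Jσ z k i) * (Jμ z k j + ε ω k * Jσ z k j) := by
    intro ω
    simp [Matrix.mul_apply, Matrix.transpose_apply, Matrix.add_apply,
      Matrix.diagonal_apply, ite_mul, mul_ite, Finset.sum_ite_eq, Finset.sum_ite_eq',
      mul_comm]
  simp only [entry]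
  have hintk : ∀ k : Fin D, Integrable
      (fun ω => (Jμ z k i + ε ω k * Jσ z k i) * (Jμ z k j + ε ω k * Jσ z k j)) P := by
    intro k
    have heq : (fun ω => (Jμ z k i + ε ω k * Jσ z k i) * (Jμ z k j + ε ω k * Jσ z k j))
        = fun ω => Jμ z k i * Jμ z k j +
            ((Jμ z k i * Jσ z k j + Jμ z k j * Jσ z k i) * ε ω k +
             (Jσ z k i * Jσ z k j) * (ε ω k * ε ω k)) := by
      funext ω; ring
    rw [heq]
    exact (integrable_const _).add (((hint1 k).const_mul _).add ((hint2 k k).const_mul _))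
  rw [integral_finset_sum _ (fun k _ => hintk k)]
  have : ∀ k : Fin D,
      ∫ ω, (Jμ z k i + ε ω k * Jσ z k i) * (Jμ z k j + ε ω k * Jσ z k j) ∂P
      = Jμ z k i * Jμ z k j + Jσ z k i * Jσ z k j := by
    intro k
    exact aux_int P (fun ω => ε ω k) (hint1 k) (hint2 k k) (hmean k) (by simpa using hcov k k)
      _ _ _ _
  simp only [this]
  simp [Matrix.mul_apply, Matrix.transpose_apply, Matrix.add_apply, Finset.sum_add_distrib]
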